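/- arXiv:2409.05706 — 2 statements merged into one kernel-verified Lean document; each statement's English description precedes it below -/
import Mathlib

section
/- Let $f\in\mathbb{L}^\infty(\mathbb{R}^{2d})$ and let $P_t$ be the kinetic semigroup. Then for all $0<s\le t\le 1$: $\|P_t f - P_s \Gamma_{t-s} f\|_\infty \le C\big(\frac{t-s}{s}\wedge 1\big)\,\|f\|_\infty$, with $C$ depending only on $d$. -/
open MeasureTheory Real

noncomputable section

/-- The kinetic Gaussian kernel `g_t` on `ℝ^d × ℝ^d`. -/
def gker (d : ℕ) (t : ℝ)
    (z : EuclideanSpace ℝ (Fin d) × EuclideanSpace ℝ (Fin d)) : ℝ :=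
  (Real.pi * t ^ 4 / 3) ^ (-(d : ℝ) / 2) *
    Real.exp (-(3 * ‖z.1‖ ^ 2 + ‖(3 : ℝ) • z.1 - (2 * t) • z.2‖ ^ 2) / (2 * t ^ 3))

/-- The shear operator `Γ_t f(x,v) = f(x + t v, v)`. -/
def Gam {d : ℕ} (t : ℝ)
    (f : EuclideanSpace ℝ (Fin d) × EuclideanSpace ℝ (Fin d) → ℝ) :
    EuclideanSpace ℝ (Fin d) × EuclideanSpace ℝ (Fin d) → ℝ :=
  fun z => f (z.1 + t • z.2, z.2)

/-- The kinetic semigroup in convolution form: `P_t f = (Γ_t g_t) * (Γ_t f)`. -/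
def Pker (d : ℕ) (t : ℝ)
    (f : EuclideanSpace ℝ (Fin d) × EuclideanSpace ℝ (Fin d) → ℝ)
    (z : EuclideanSpace ℝ (Fin d) × EuclideanSpace ℝ (Fin d)) : ℝ :=
  ∫ y, Gam t (gker d t) y * Gam t f (z - y)

/-!
Write `Γ_r g_r = c_r exp (-q_r)` with an explicit quadratic form `q_r` (`shearExponent`).
For `s ≤ t ≤ 2 s`, both `c_r` and `q_r` change by a relative amount `O((t - s) / s)` between
`r = s` and `r = t`, while `q_t` and `q_s` dominate the anisotropic norm `|x|² / s³ + |v|² / s`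
(`kineticNormSq`). Since `Q e^{-Q} ≤ 2 e^{-Q/2}`, `|Γ_t g_t - Γ_s g_s|` is then bounded by
`(t - s) / s` times a Gaussian whose mass does not depend on `s`; for `t > 2 s` it suffices that
both kernels have bounded mass. As `Γ_s Γ_{t-s} = Γ_t`, the difference `P_t f - P_s Γ_{t-s} f`
is the integral of `Γ_t f (z - ·)` against `Γ_t g_t - Γ_s g_s`.
-/

theorem one_sub_div_pow_le {s t : ℝ} (hs : 0 < s) (hst : s ≤ t) (n : ℕ) :
    1 - (s / t) ^ n ≤ n * ((t - s) / s) := by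
  have ht : 0 < t := hs.trans_le hst
  have bernoulli := one_add_mul_le_pow (a := s / t - 1)
    (by linarith [div_nonneg hs.le ht.le]) n
  rw [add_sub_cancel] at bernoulli
  have hratio : 1 - s / t ≤ (t - s) / s := by
    rw [one_sub_div ht.ne']; exact div_le_div_of_nonneg_left (by linarith) hs hst
  nlinarith [(n.cast_nonneg : (0:ℝ) ≤ n)]

theorem inv_pow_sub_inv_pow_le {s t : ℝ} (hs : 0 < s) (hst : s ≤ t) (n : ℕ) :
    (s ^ n)⁻¹ - (t ^ n)⁻¹ ≤ n * ((t - s) / s) / s ^ n := by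
  have ht : 0 < t := hs.trans_le hst
  rw [show (s ^ n)⁻¹ - (t ^ n)⁻¹ = (1 - (s / t) ^ n) / s ^ n by rw [div_pow]; field_simp]
  gcongr
  exact one_sub_div_pow_le hs hst n

theorem abs_exp_neg_sub_exp_neg_le {a b Q : ℝ} (ha : Q ≤ a) (hb : Q ≤ b) :
    |exp (-a) - exp (-b)| ≤ |a - b| * exp (-Q) := by
  wlog hab : a ≤ b generalizing a b
  · rw [abs_sub_comm, abs_sub_comm a]; exact this hb ha (le_of_not_ge hab)
  have hdecay : exp (-b) = exp (-a) * exp (-(b - a)) := by rw [← exp_add]; ring_nf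
  calc |exp (-a) - exp (-b)| = exp (-a) * (1 - exp (-(b - a))) := by
        rw [abs_of_nonneg (sub_nonneg.2 (exp_le_exp.2 (by linarith))), hdecay]; ring
    _ ≤ exp (-Q) * (b - a) :=
        mul_le_mul (exp_le_exp.2 (by linarith)) (by linarith [one_sub_le_exp_neg (b - a)])
          (sub_nonneg.2 (exp_le_one_iff.2 (by linarith))) (exp_nonneg _)
    _ = |a - b| * exp (-Q) := by rw [abs_sub_comm, abs_of_nonneg (by linarith), mul_comm]

theorem mul_exp_neg_le (Q : ℝ) : Q * exp (-Q) ≤ 2 * exp (-(Q / 2)) := by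
  have hexp := add_one_le_exp (Q / 2)
  have hsplit : exp (-(Q / 2)) = exp (Q / 2) * exp (-Q) := by rw [← exp_add]; ring_nf
  rw [hsplit]
  nlinarith [exp_pos (-Q)]

section KineticNorm

variable {V : Type*} [NormedAddCommGroup V]

def kineticNormSq (r : ℝ) (z : V × V) : ℝ := ‖z.1‖ ^ 2 / r ^ 3 + ‖z.2‖ ^ 2 / r

theorem kineticNormSq_nonneg {r : ℝ} (hr : 0 ≤ r) (z : V × V) : 0 ≤ kineticNormSq r z := by
  unfold kineticNormSq; positivity

theorem kineticNormSq_div_eq (s c : ℝ) (z : V × V) :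
    kineticNormSq s z / c = 1 / (c * s ^ 3) * ‖z.1‖ ^ 2 + 1 / (c * s) * ‖z.2‖ ^ 2 := by
  unfold kineticNormSq; ring

theorem kineticNormSq_div_le {s r : ℝ} (hs : 0 < s) (hsr : s ≤ r) (hr : r ≤ 2 * s) (z : V × V) :
    kineticNormSq s z / 8 ≤ kineticNormSq r z := by
  have h0 : 0 < r := hs.trans_le hsr
  have hx : ‖z.1‖ ^ 2 / (s ^ 3 * 8) ≤ ‖z.1‖ ^ 2 / r ^ 3 := by
    gcongr; calc r ^ 3 ≤ (2 * s) ^ 3 := by gcongr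
      _ = s ^ 3 * 8 := by ring
  have hv : ‖z.2‖ ^ 2 / (s * 8) ≤ ‖z.2‖ ^ 2 / r := by gcongr; linarith
  unfold kineticNormSq
  rw [add_div, div_div, div_div]
  linarith

variable [InnerProductSpace ℝ V]

def shearExponent (r : ℝ) (z : V × V) : ℝ :=
  (6 * ‖z.1‖ ^ 2 + 6 * r * inner ℝ z.1 z.2 + 2 * r ^ 2 * ‖z.2‖ ^ 2) / r ^ 3

theorem kineticNormSq_div_three_le_shearExponent {r : ℝ} (hr : 0 < r) (z : V × V) :
    kineticNormSq r z / 3 ≤ shearExponent r z := by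
  have hinner : -(‖z.1‖ * ‖z.2‖) ≤ inner ℝ z.1 z.2 :=
    neg_le_of_abs_le (abs_real_inner_le_norm _ _)
  have hquad : (‖z.1‖ ^ 2 + r ^ 2 * ‖z.2‖ ^ 2) / 3
      ≤ 6 * ‖z.1‖ ^ 2 + 6 * r * inner ℝ z.1 z.2 + 2 * r ^ 2 * ‖z.2‖ ^ 2 := by
    nlinarith [mul_le_mul_of_nonneg_left hinner (by positivity : (0:ℝ) ≤ 6 * r),
      sq_nonneg (17 * ‖z.1‖ - 9 * r * ‖z.2‖), sq_nonneg (r * ‖z.2‖)]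
  calc kineticNormSq r z / 3 = (‖z.1‖ ^ 2 + r ^ 2 * ‖z.2‖ ^ 2) / 3 / r ^ 3 := by
        unfold kineticNormSq; field_simp
    _ ≤ shearExponent r z := by unfold shearExponent; gcongr

theorem abs_shearExponent_sub_le {s t : ℝ} (hs : 0 < s) (hst : s ≤ t) (z : V × V) :
    |shearExponent t z - shearExponent s z| ≤ 24 * ((t - s) / s) * kineticNormSq s z := by
  have ht : 0 < t := hs.trans_le hst
  set a := ‖z.1‖
  set b := ‖z.2‖
  set θ := (t - s) / s
  have hθ : 0 ≤ θ := div_nonneg (sub_nonneg.2 hst) hs.le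
  obtain ⟨hip₁, hip₂⟩ := abs_le.mp (abs_real_inner_le_norm z.1 z.2)
  have hdiff : shearExponent t z - shearExponent s z
      = -(6 * a ^ 2 * ((s ^ 3)⁻¹ - (t ^ 3)⁻¹) + 6 * inner ℝ z.1 z.2 * ((s ^ 2)⁻¹ - (t ^ 2)⁻¹)
          + 2 * b ^ 2 * ((s ^ 1)⁻¹ - (t ^ 1)⁻¹)) := by
    unfold shearExponent; field_simp; ring
  have h3 : 0 ≤ (s ^ 3)⁻¹ - (t ^ 3)⁻¹ := sub_nonneg.2 (by gcongr)
  have h2 : 0 ≤ (s ^ 2)⁻¹ - (t ^ 2)⁻¹ := sub_nonneg.2 (by gcongr)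
  have h1 : 0 ≤ (s ^ 1)⁻¹ - (t ^ 1)⁻¹ := sub_nonneg.2 (by gcongr)
  have hamgm : 2 * (a * b) / s ^ 2 ≤ a ^ 2 / s ^ 3 + b ^ 2 / s := by
    rw [div_add_div _ _ (by positivity) hs.ne', div_le_div_iff₀ (by positivity) (by positivity)]
    nlinarith [sq_nonneg (a - s * b), pow_pos hs 4]
  calc |shearExponent t z - shearExponent s z|
      ≤ 6 * a ^ 2 * ((s ^ 3)⁻¹ - (t ^ 3)⁻¹) + 6 * (a * b) * ((s ^ 2)⁻¹ - (t ^ 2)⁻¹)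
          + 2 * b ^ 2 * ((s ^ 1)⁻¹ - (t ^ 1)⁻¹) := by
        rw [hdiff, abs_neg, abs_le]
        constructor <;> nlinarith [mul_le_mul_of_nonneg_right hip₁ h2,
          mul_le_mul_of_nonneg_right hip₂ h2, mul_nonneg (sq_nonneg a) h3,
          mul_nonneg (sq_nonneg b) h1]
    _ ≤ 6 * a ^ 2 * ((3 : ℕ) * θ / s ^ 3) + 6 * (a * b) * ((2 : ℕ) * θ / s ^ 2)
          + 2 * b ^ 2 * ((1 : ℕ) * θ / s ^ 1) := by
        gcongr <;> exact inv_pow_sub_inv_pow_le hs hst _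
    _ = θ * (18 * (a ^ 2 / s ^ 3) + 6 * (2 * (a * b) / s ^ 2) + 2 * (b ^ 2 / s)) := by
        push_cast; ring
    _ ≤ θ * (18 * (a ^ 2 / s ^ 3) + 6 * (a ^ 2 / s ^ 3 + b ^ 2 / s) + 2 * (b ^ 2 / s)) := by
        gcongr
    _ ≤ 24 * θ * kineticNormSq s z := by
        unfold kineticNormSq
        nlinarith [mul_nonneg hθ (div_nonneg (sq_nonneg b) hs.le)]

end KineticNorm

section Gaussian

variable {V : Type*} [NormedAddCommGroup V] [InnerProductSpace ℝ V] [FiniteDimensional ℝ V]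
  [MeasurableSpace V] [BorelSpace V]

theorem integrable_exp_neg_mul_sq_norm {b : ℝ} (hb : 0 < b) :
    Integrable (fun v : V => exp (-b * ‖v‖ ^ 2)) := by
  refine (GaussianFourier.integrable_cexp_neg_mul_sq_norm_add (V := V) (b := b)
    (by simpa using hb) 0 0).re.congr (.of_forall fun v => ?_)
  simp only [zero_mul, add_zero]
  rw [show -(b : ℂ) * (‖v‖ : ℂ) ^ 2 = ((-b * ‖v‖ ^ 2 : ℝ) : ℂ) by push_cast; ring]
  exact Complex.exp_ofReal_re _

theorem integrable_exp_neg_sq_norm_prod {α β : ℝ} (hα : 0 < α) (hβ : 0 < β) :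
    Integrable (fun z : V × V => exp (-(α * ‖z.1‖ ^ 2 + β * ‖z.2‖ ^ 2))) := by
  have h := (integrable_exp_neg_mul_sq_norm (V := V) hα).mul_prod
    (integrable_exp_neg_mul_sq_norm (V := V) hβ)
  rw [← Measure.volume_eq_prod] at h
  refine h.congr (.of_forall fun z => ?_)
  simp only [← exp_add]
  ring_nf

theorem integral_exp_neg_sq_norm_prod {α β : ℝ} (hα : 0 < α) (hβ : 0 < β) :
    ∫ z : V × V, exp (-(α * ‖z.1‖ ^ 2 + β * ‖z.2‖ ^ 2))
      = (π / α * (π / β)) ^ (Module.finrank ℝ V / 2 : ℝ) := by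
  have hsplit : (fun z : V × V => exp (-(α * ‖z.1‖ ^ 2 + β * ‖z.2‖ ^ 2)))
      = fun z => exp (-α * ‖z.1‖ ^ 2) * exp (-β * ‖z.2‖ ^ 2) := by
    funext z; rw [← exp_add]; ring_nf
  rw [hsplit, Measure.volume_eq_prod, integral_prod_mul (f := fun x : V => exp (-α * ‖x‖ ^ 2))
    (g := fun x : V => exp (-β * ‖x‖ ^ 2)), GaussianFourier.integral_rexp_neg_mul_sq_norm hα,
    GaussianFourier.integral_rexp_neg_mul_sq_norm hβ, mul_rpow (by positivity) (by positivity)]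

theorem integrable_exp_neg_kineticNormSq_div {s c : ℝ} (hs : 0 < s) (hc : 0 < c) :
    Integrable (fun z : V × V => exp (-(kineticNormSq s z / c))) := by
  simp_rw [kineticNormSq_div_eq]
  exact integrable_exp_neg_sq_norm_prod (by positivity) (by positivity)

theorem integral_exp_neg_kineticNormSq_div {s c : ℝ} (hs : 0 < s) (hc : 0 < c) :
    ∫ z : V × V, exp (-(kineticNormSq s z / c))
      = (π ^ 2 * c ^ 2 * s ^ 4) ^ (Module.finrank ℝ V / 2 : ℝ) := by
  simp_rw [kineticNormSq_div_eq]
  rw [integral_exp_neg_sq_norm_prod (by positivity) (by positivity)]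
  congr 1
  field_simp

end Gaussian

theorem abs_integral_mul_sub_integral_mul_le {α : Type*} [MeasurableSpace α] {μ : Measure α}
    {k₁ k₂ φ : α → ℝ} {M : ℝ} (hk₁ : Integrable k₁ μ) (hk₂ : Integrable k₂ μ)
    (hφ : AEStronglyMeasurable φ μ) (hM : ∀ y, |φ y| ≤ M) :
    |∫ y, k₁ y * φ y ∂μ - ∫ y, k₂ y * φ y ∂μ| ≤ M * ∫ y, |k₁ y - k₂ y| ∂μ := by
  have hφ_bdd : ∀ᵐ y ∂μ, ‖φ y‖ ≤ M := .of_forall hM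
  rw [← integral_sub (hk₁.mul_bdd hφ hφ_bdd) (hk₂.mul_bdd hφ hφ_bdd), ← integral_const_mul,
    ← norm_eq_abs]
  refine norm_integral_le_of_norm_le ((hk₁.sub hk₂).abs.const_mul M) (.of_forall fun y => ?_)
  rw [norm_eq_abs, ← sub_mul, abs_mul, mul_comm]
  exact mul_le_mul_of_nonneg_right (hM y) (abs_nonneg _)

section KineticKernel

variable {d : ℕ}

local notation "E" => EuclideanSpace ℝ (Fin d)

def kineticConst (d : ℕ) (r : ℝ) : ℝ := (π * r ^ 4 / 3) ^ (-(d : ℝ) / 2)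

theorem kineticConst_pos {r : ℝ} (hr : 0 < r) : 0 < kineticConst d r :=
  rpow_pos_of_pos (by positivity) _

theorem kineticConst_eq_mul_div_pow {s t : ℝ} (hs : 0 < s) (ht : 0 < t) :
    kineticConst d t = kineticConst d s * (s / t) ^ (2 * d) := by
  have hscale : π * t ^ 4 / 3 = (π * s ^ 4 / 3) * ((s / t) ^ 4)⁻¹ := by field_simp
  rw [kineticConst, kineticConst, hscale, mul_rpow (by positivity) (by positivity),
    inv_rpow (by positivity), ← rpow_neg (by positivity), neg_div, neg_neg,
    ← rpow_natCast (s / t) 4, ← rpow_mul (by positivity), ← rpow_natCast (s / t) (2 * d)]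
  congr 2
  push_cast
  ring

theorem abs_kineticConst_sub_le {s t : ℝ} (hs : 0 < s) (hst : s ≤ t) :
    |kineticConst d t - kineticConst d s| ≤ 2 * d * ((t - s) / s) * kineticConst d s := by
  have ht : 0 < t := hs.trans_le hst
  have hpow : (s / t) ^ (2 * d) ≤ 1 := pow_le_one₀ (by positivity) ((div_le_one ht).2 hst)
  have hbernoulli := one_sub_div_pow_le hs hst (2 * d)
  rw [kineticConst_eq_mul_div_pow hs ht, abs_sub_comm,
    show kineticConst d s - kineticConst d s * (s / t) ^ (2 * d)
      = kineticConst d s * (1 - (s / t) ^ (2 * d)) by ring,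
    abs_of_nonneg (mul_nonneg (kineticConst_pos hs).le (by linarith)), mul_comm]
  push_cast at hbernoulli
  gcongr
  exact (kineticConst_pos hs).le

theorem integral_kineticConst_mul_exp {s c : ℝ} (hs : 0 < s) (hc : 0 < c) :
    ∫ z : E × E, kineticConst d s * exp (-(kineticNormSq s z / c))
      = (3 * π * c ^ 2) ^ ((d : ℝ) / 2) := by
  rw [integral_const_mul, integral_exp_neg_kineticNormSq_div hs hc, finrank_euclideanSpace_fin,
    kineticConst, neg_div, rpow_neg (by positivity), ← div_eq_inv_mul,
    ← div_rpow (by positivity) (by positivity)]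
  congr 1
  field_simp

theorem Gam_gker_eq {r : ℝ} (hr : r ≠ 0) (z : E × E) :
    Gam r (gker d r) z = kineticConst d r * exp (-shearExponent r z) := by
  obtain ⟨x, v⟩ := z
  have hvec : (3 : ℝ) • (x + r • v) - (2 * r) • v = (3 : ℝ) • x + r • v := by module
  have hnorm₁ : ‖x + r • v‖ ^ 2 = ‖x‖ ^ 2 + 2 * r * inner ℝ x v + r ^ 2 * ‖v‖ ^ 2 := by
    rw [norm_add_sq_real, real_inner_smul_right, norm_smul, mul_pow, norm_eq_abs, sq_abs]
    ring
  have hnorm₂ : ‖(3 : ℝ) • x + r • v‖ ^ 2 = 9 * ‖x‖ ^ 2 + 6 * r * inner ℝ x v + r ^ 2 * ‖v‖ ^ 2 := by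
    rw [norm_add_sq_real, real_inner_smul_right, real_inner_smul_left, norm_smul, norm_smul,
      mul_pow, mul_pow, norm_eq_abs, norm_eq_abs, sq_abs, sq_abs]
    ring
  simp only [Gam, gker, kineticConst, shearExponent]
  rw [hvec, hnorm₁, hnorm₂]
  congr 2
  field_simp
  ring

theorem continuous_Gam_gker (r : ℝ) : Continuous (Gam r (gker d r)) := by
  unfold Gam gker; fun_prop

theorem Gam_gker_nonneg (r : ℝ) (z : E × E) : 0 ≤ Gam r (gker d r) z := by
  unfold Gam gker; positivity

theorem Gam_gker_le {r : ℝ} (hr : 0 < r) (z : E × E) :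
    Gam r (gker d r) z ≤ kineticConst d r * exp (-(kineticNormSq r z / 3)) := by
  rw [Gam_gker_eq hr.ne']
  exact mul_le_mul_of_nonneg_left
    (exp_le_exp.2 (neg_le_neg (kineticNormSq_div_three_le_shearExponent hr z)))
    (kineticConst_pos hr).le

theorem integrable_Gam_gker {r : ℝ} (hr : 0 < r) : Integrable (Gam r (gker d r)) :=
  ((integrable_exp_neg_kineticNormSq_div hr three_pos).const_mul _).mono'
    (continuous_Gam_gker r).aestronglyMeasurable
    (.of_forall fun z => by
      rw [norm_of_nonneg (Gam_gker_nonneg r z)]; exact Gam_gker_le hr z)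

theorem integral_Gam_gker_le {r : ℝ} (hr : 0 < r) :
    ∫ z, Gam r (gker d r) z ≤ (27 * π) ^ ((d : ℝ) / 2) := by
  calc ∫ z, Gam r (gker d r) z
      ≤ ∫ z : E × E, kineticConst d r * exp (-(kineticNormSq r z / 3)) :=
        integral_mono (integrable_Gam_gker hr)
          ((integrable_exp_neg_kineticNormSq_div hr three_pos).const_mul _) (Gam_gker_le hr)
    _ = (27 * π) ^ ((d : ℝ) / 2) := by
        rw [integral_kineticConst_mul_exp hr three_pos]; ring_nf

theorem abs_Gam_gker_sub_le {s t : ℝ} (hs : 0 < s) (hst : s ≤ t) (ht2 : t ≤ 2 * s)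
    (z : E × E) :
    |Gam t (gker d t) z - Gam s (gker d s) z|
      ≤ (2 * d + 1152) * ((t - s) / s) * (kineticConst d s * exp (-(kineticNormSq s z / 48))) := by
  have ht : 0 < t := hs.trans_le hst
  have hθ : 0 ≤ (t - s) / s := div_nonneg (sub_nonneg.2 hst) hs.le
  set Q := kineticNormSq s z / 24 with hQdef
  have hQ : 0 ≤ Q := div_nonneg (kineticNormSq_nonneg hs.le z) (by norm_num)
  have hQt : Q ≤ shearExponent t z := by
    linarith [kineticNormSq_div_le hs hst ht2 z, kineticNormSq_div_three_le_shearExponent ht z,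
      hQdef]
  have hQs : Q ≤ shearExponent s z := by
    linarith [kineticNormSq_div_three_le_shearExponent hs z, kineticNormSq_nonneg hs.le z, hQdef]
  have hhalf : kineticNormSq s z / 48 = Q / 2 := by ring
  have hKs := kineticConst_pos (d := d) hs
  have hconst : |(kineticConst d t - kineticConst d s) * exp (-shearExponent t z)|
      ≤ 2 * d * ((t - s) / s) * kineticConst d s * exp (-(Q / 2)) := by
    rw [abs_mul, abs_of_pos (exp_pos _)]
    exact mul_le_mul (abs_kineticConst_sub_le hs hst) (exp_le_exp.2 (by linarith))
      (exp_nonneg _) (by positivity)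
  have hexp : |exp (-shearExponent t z) - exp (-shearExponent s z)|
      ≤ 1152 * ((t - s) / s) * exp (-(Q / 2)) :=
    calc |exp (-shearExponent t z) - exp (-shearExponent s z)|
        ≤ |shearExponent t z - shearExponent s z| * exp (-Q) := abs_exp_neg_sub_exp_neg_le hQt hQs
      _ ≤ 576 * ((t - s) / s) * Q * exp (-Q) := by
          gcongr
          exact (abs_shearExponent_sub_le hs hst z).trans_eq (by ring)
      _ ≤ 576 * ((t - s) / s) * (2 * exp (-(Q / 2))) := by
          rw [mul_assoc]; exact mul_le_mul_of_nonneg_left (mul_exp_neg_le Q) (by positivity)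
      _ = 1152 * ((t - s) / s) * exp (-(Q / 2)) := by ring
  rw [Gam_gker_eq ht.ne', Gam_gker_eq hs.ne', hhalf]
  calc |kineticConst d t * exp (-shearExponent t z) - kineticConst d s * exp (-shearExponent s z)|
      = |(kineticConst d t - kineticConst d s) * exp (-shearExponent t z)
          + kineticConst d s * (exp (-shearExponent t z) - exp (-shearExponent s z))| := by ring_nf
    _ ≤ 2 * d * ((t - s) / s) * kineticConst d s * exp (-(Q / 2))
          + kineticConst d s * (1152 * ((t - s) / s) * exp (-(Q / 2))) := by
        refine (abs_add_le _ _).trans (add_le_add hconst ?_)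
        rw [abs_mul, abs_of_pos hKs]
        gcongr
    _ = (2 * d + 1152) * ((t - s) / s) * (kineticConst d s * exp (-(Q / 2))) := by ring

theorem integral_abs_Gam_gker_sub_le_of_le_two_mul {s t : ℝ} (hs : 0 < s) (hst : s ≤ t)
    (ht2 : t ≤ 2 * s) :
    ∫ z, |Gam t (gker d t) z - Gam s (gker d s) z|
      ≤ (2 * d + 1152) * (6912 * π) ^ ((d : ℝ) / 2) * ((t - s) / s) := by
  have hbound := ((integrable_exp_neg_kineticNormSq_div (V := E) hs (by norm_num : (0:ℝ) < 48)
    ).const_mul (kineticConst d s)).const_mul ((2 * d + 1152) * ((t - s) / s))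
  calc ∫ z, |Gam t (gker d t) z - Gam s (gker d s) z|
      ≤ ∫ z : E × E, (2 * d + 1152) * ((t - s) / s)
          * (kineticConst d s * exp (-(kineticNormSq s z / 48))) :=
        integral_mono (((integrable_Gam_gker (hs.trans_le hst)).sub
          (integrable_Gam_gker hs)).abs) hbound (abs_Gam_gker_sub_le hs hst ht2)
    _ = (2 * d + 1152) * (6912 * π) ^ ((d : ℝ) / 2) * ((t - s) / s) := by
        rw [integral_const_mul, integral_kineticConst_mul_exp hs (by norm_num)]
        ring_nf

theorem integral_abs_Gam_gker_sub_le {s t : ℝ} (hs : 0 < s) (ht : 0 < t) :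
    ∫ z, |Gam t (gker d t) z - Gam s (gker d s) z| ≤ 2 * (27 * π) ^ ((d : ℝ) / 2) :=
  calc ∫ z, |Gam t (gker d t) z - Gam s (gker d s) z|
      ≤ ∫ z, (Gam t (gker d t) z + Gam s (gker d s) z) :=
        integral_mono ((integrable_Gam_gker ht).sub (integrable_Gam_gker hs)).abs
          ((integrable_Gam_gker ht).add (integrable_Gam_gker hs)) fun z =>
            (abs_sub _ _).trans_eq (by
              rw [abs_of_nonneg (Gam_gker_nonneg t z), abs_of_nonneg (Gam_gker_nonneg s z)])
    _ ≤ 2 * (27 * π) ^ ((d : ℝ) / 2) := by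
        rw [integral_add (integrable_Gam_gker ht) (integrable_Gam_gker hs)]
        linarith [integral_Gam_gker_le (d := d) ht, integral_Gam_gker_le (d := d) hs]

theorem Gam_Gam (r s : ℝ) (f : E × E → ℝ) : Gam s (Gam r f) = Gam (s + r) f := by
  funext z
  simp only [Gam, add_smul, add_assoc]

theorem measurable_Gam (r : ℝ) {f : E × E → ℝ} (hf : Measurable f) : Measurable (Gam r f) :=
  hf.comp (by fun_prop : Continuous fun z : E × E => (z.1 + r • z.2, z.2)).measurable

theorem abs_Pker_sub_Pker_Gam_le {f : E × E → ℝ} (hf : Measurable f) {M : ℝ}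
    (hM : ∀ z, |f z| ≤ M) {s t : ℝ} (hs : 0 < s) (ht : 0 < t) (z : E × E) :
    |Pker d t f z - Pker d s (Gam (t - s) f) z|
      ≤ M * ∫ y, |Gam t (gker d t) y - Gam s (gker d s) y| := by
  rw [Pker, Pker, Gam_Gam, add_sub_cancel]
  exact abs_integral_mul_sub_integral_mul_le (integrable_Gam_gker ht) (integrable_Gam_gker hs)
    ((measurable_Gam t hf).comp (measurable_const.sub measurable_id)).aestronglyMeasurable
    fun y => hM _

end KineticKernel

theorem exists_integral_abs_Gam_gker_sub_le (d : ℕ) :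
    ∃ C : ℝ, 0 < C ∧ ∀ s t : ℝ, 0 < s → s ≤ t →
      ∫ z : EuclideanSpace ℝ (Fin d) × EuclideanSpace ℝ (Fin d),
        |Gam t (gker d t) z - Gam s (gker d s) z| ≤ C * min ((t - s) / s) 1 := by
  refine ⟨max ((2 * d + 1152) * (6912 * π) ^ ((d : ℝ) / 2)) (2 * (27 * π) ^ ((d : ℝ) / 2)),
    lt_max_of_lt_right (by positivity), fun s t hs hst => ?_⟩
  rcases le_total ((t - s) / s) 1 with hsmall | hlarge
  · rw [min_eq_left hsmall]
    have ht2 : t ≤ 2 * s := by rw [div_le_one hs] at hsmall; linarith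
    exact (integral_abs_Gam_gker_sub_le_of_le_two_mul hs hst ht2).trans
      (mul_le_mul_of_nonneg_right (le_max_left _ _) (div_nonneg (sub_nonneg.2 hst) hs.le))
  · rw [min_eq_right hlarge, mul_one]
    exact (integral_abs_Gam_gker_sub_le hs (hs.trans_le hst)).trans (le_max_right _ _)

/-- Sup-norm continuity of the kinetic semigroup with shear correction:
`‖P_t f - P_s Γ_{t-s} f‖_∞ ≤ C ((t-s)/s ∧ 1) ‖f‖_∞` for `0 < s ≤ t ≤ 1`. -/
theorem Pker_shear_time_continuity (d : ℕ) :
    ∃ C : ℝ, 0 < C ∧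
      ∀ (f : EuclideanSpace ℝ (Fin d) × EuclideanSpace ℝ (Fin d) → ℝ),
        Measurable f → ∀ M : ℝ, (∀ z, |f z| ≤ M) →
        ∀ s t : ℝ, 0 < s → s ≤ t → t ≤ 1 →
        ∀ z, |Pker d t f z - Pker d s (Gam (t - s) f) z|
          ≤ C * (min ((t - s) / s) 1) * M := by
  obtain ⟨C, hC, hL1⟩ := exists_integral_abs_Gam_gker_sub_le d
  refine ⟨C, hC, fun f hf M hM s t hs hst _ z => ?_⟩
  calc |Pker d t f z - Pker d s (Gam (t - s) f) z|
      ≤ M * ∫ y, |Gam t (gker d t) y - Gam s (gker d s) y| :=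
        abs_Pker_sub_Pker_Gam_le hf hM hs (hs.trans_le hst) z
    _ ≤ M * (C * min ((t - s) / s) 1) :=
        mul_le_mul_of_nonneg_left (hL1 s t hs hst) ((abs_nonneg _).trans (hM z))
    _ = C * min ((t - s) / s) 1 * M := by ring
end
end

section
/- Let $\alpha,\beta\in(0,1)$ and $\gamma\ge 1$. Then there is $C=C(\alpha,\beta,\gamma)>0$ such that for all $t,\lambda>0$: $\int_0^t s^{-\alpha}(t-s)^{-\beta}\,\big( (\lambda(t-s))^{-\gamma}\wedge 1 \big)\,ds \le C\,\lambda^{-1+\beta}\, t^{-\alpha}$. -/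
open MeasureTheory Real

lemma min_rpow_le {β γ : ℝ} (hβ0 : 0 ≤ β) (hβ1 : β < 1) (hγ : 1 ≤ γ) {x : ℝ} (hx : 0 < x) :
    min (x ^ (-γ)) 1 ≤ x ^ (β - 1) := by
  rcases le_total 1 x with h | h
  · exact (min_le_left _ _).trans (Real.rpow_le_rpow_of_exponent_le h (by linarith))
  · exact (min_le_right _ _).trans (by
      nth_rewrite 1 [← Real.rpow_zero x]
      exact Real.rpow_le_rpow_of_exponent_ge hx h (by linarith))

lemma key_int {β γ lam b : ℝ} (hβ1 : β < 1) (hlam : 0 < lam) (hb : 0 ≤ b) :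
    IntervalIntegrable (fun u : ℝ => u ^ (-β) * min ((lam * u) ^ (-γ)) 1) volume 0 b := by
  rw [intervalIntegrable_iff_integrableOn_Ioc_of_le hb]
  have hg : IntegrableOn (fun u : ℝ => u ^ (-β)) (Set.Ioc 0 b) volume := by
    rw [← intervalIntegrable_iff_integrableOn_Ioc_of_le hb]
    exact intervalIntegral.intervalIntegrable_rpow' (by linarith)
  have hm : Measurable (fun u : ℝ => u ^ (-β) * min ((lam * u) ^ (-γ)) 1) := by fun_prop
  refine hg.mono' hm.aestronglyMeasurable ?_
  filter_upwards [ae_restrict_mem measurableSet_Ioc] with u hu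
  have hu0 : (0:ℝ) < u := hu.1
  have h1 : 0 ≤ min ((lam * u) ^ (-γ)) 1 :=
    le_min (Real.rpow_nonneg (by positivity) _) zero_le_one
  have h2 : 0 ≤ u ^ (-β) := Real.rpow_nonneg hu0.le _
  rw [Real.norm_of_nonneg (mul_nonneg h2 h1)]
  calc u ^ (-β) * min ((lam * u) ^ (-γ)) 1 ≤ u ^ (-β) * 1 :=
        mul_le_mul_of_nonneg_left (min_le_right _ _) h2
    _ = u ^ (-β) := mul_one _

lemma key_bound {β γ lam b : ℝ} (hβ0 : 0 < β) (hβ1 : β < 1) (hγ : 1 ≤ γ)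
    (hb : 0 < b) (hlam : 0 < lam) :
    ∫ u in (0:ℝ)..b, u ^ (-β) * min ((lam * u) ^ (-γ)) 1
      ≤ lam ^ (β - 1) * (1 / (1 - β) + 1 / (γ + β - 1)) := by
  have h1β : (0:ℝ) < 1 - β := by linarith
  have hgb : (0:ℝ) < γ + β - 1 := by linarith
  have hil : (0:ℝ) < 1 / lam := by positivity
  have hinv : (1 / lam) ^ (-β + 1) = lam ^ (β - 1) := by
    rw [one_div, Real.inv_rpow hlam.le, ← Real.rpow_neg hlam.le]
    congr 1; ring
  have base : ∀ c : ℝ, 0 < c → c ≤ 1 / lam →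
      (∫ u in (0:ℝ)..c, u ^ (-β) * min ((lam * u) ^ (-γ)) 1)
        ≤ lam ^ (β - 1) * (1 / (1 - β)) := by
    intro c hc hcle
    calc (∫ u in (0:ℝ)..c, u ^ (-β) * min ((lam * u) ^ (-γ)) 1)
        ≤ ∫ u in (0:ℝ)..c, u ^ (-β) := by
          refine intervalIntegral.integral_mono_on hc.le (key_int hβ1 hlam hc.le)
            (intervalIntegral.intervalIntegrable_rpow' (by linarith)) ?_
          intro u hu
          have h2 : 0 ≤ u ^ (-β) := Real.rpow_nonneg hu.1 _
          calc u ^ (-β) * min ((lam * u) ^ (-γ)) 1 ≤ u ^ (-β) * 1 :=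
                mul_le_mul_of_nonneg_left (min_le_right _ _) h2
            _ = u ^ (-β) := mul_one _
      _ = c ^ (-β + 1) / (-β + 1) := by
          rw [integral_rpow (Or.inl (by linarith)),
            Real.zero_rpow (by linarith : -β + 1 ≠ 0)]
          ring
      _ ≤ (1 / lam) ^ (-β + 1) / (-β + 1) := by gcongr <;> linarith
      _ = lam ^ (β - 1) * (1 / (1 - β)) := by
          rw [hinv, show (-β + 1 : ℝ) = 1 - β by ring, div_eq_mul_one_div]
  rcases le_or_gt b (1 / lam) with hcase | hcase
  · have h1 := base b hb hcase
    have h2 : 0 ≤ lam ^ (β - 1) * (1 / (γ + β - 1)) := by positivity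
    rw [mul_add]; linarith
  · have hIint : IntervalIntegrable (fun u : ℝ => u ^ (-β) * min ((lam * u) ^ (-γ)) 1)
        volume (1 / lam) b := by
      refine (key_int hβ1 hlam hb.le).mono_set (Set.uIcc_subset_uIcc ?_ Set.right_mem_uIcc)
      exact Set.mem_uIcc.mpr (Or.inl ⟨hil.le, hcase.le⟩)
    have h0uIcc : (0:ℝ) ∉ Set.uIcc (1 / lam) b := Set.notMem_uIcc_of_lt hil hb
    have tail : (∫ u in (1 / lam)..b, u ^ (-β) * min ((lam * u) ^ (-γ)) 1)
        ≤ lam ^ (β - 1) * (1 / (γ + β - 1)) := by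
      have hg2 : IntervalIntegrable (fun u : ℝ => lam ^ (-γ) * u ^ (-β - γ)) volume (1 / lam) b :=
        (intervalIntegral.intervalIntegrable_rpow (Or.inr h0uIcc)).const_mul _
      have hrne : (-β - γ : ℝ) ≠ -1 := by intro h; linarith [h]
      calc (∫ u in (1 / lam)..b, u ^ (-β) * min ((lam * u) ^ (-γ)) 1)
          ≤ ∫ u in (1 / lam)..b, lam ^ (-γ) * u ^ (-β - γ) := by
            refine intervalIntegral.integral_mono_on (by linarith) hIint hg2 ?_
            intro u hu
            have hu0 : (0:ℝ) < u := lt_of_lt_of_le hil hu.1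
            calc u ^ (-β) * min ((lam * u) ^ (-γ)) 1 ≤ u ^ (-β) * (lam * u) ^ (-γ) :=
                  mul_le_mul_of_nonneg_left (min_le_left _ _) (Real.rpow_nonneg hu0.le _)
              _ = lam ^ (-γ) * u ^ (-β - γ) := by
                  rw [Real.mul_rpow hlam.le hu0.le, ← mul_assoc, mul_comm (u ^ (-β)) _,
                    mul_assoc, ← Real.rpow_add hu0]
                  rfl
        _ = lam ^ (-γ) * ((b ^ (-β - γ + 1) - (1 / lam) ^ (-β - γ + 1)) / (-β - γ + 1)) := by
            rw [intervalIntegral.integral_const_mul, integral_rpow (Or.inr ⟨hrne, h0uIcc⟩)]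
        _ ≤ lam ^ (-γ) * ((1 / lam) ^ (-β - γ + 1) / (γ + β - 1)) := by
            refine mul_le_mul_of_nonneg_left ?_ (Real.rpow_nonneg hlam.le _)
            have hbr : 0 ≤ b ^ (-β - γ + 1) := Real.rpow_nonneg hb.le _
            have e1 : (b ^ (-β - γ + 1) - (1 / lam) ^ (-β - γ + 1)) / (-β - γ + 1)
                = ((1 / lam) ^ (-β - γ + 1) - b ^ (-β - γ + 1)) / (γ + β - 1) := by
              rw [show (-β - γ + 1 : ℝ) = -(γ + β - 1) by ring] at *
              rw [div_neg, neg_div', neg_sub]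
            rw [e1]
            gcongr
            linarith
        _ = lam ^ (β - 1) * (1 / (γ + β - 1)) := by
            rw [div_eq_mul_one_div, ← mul_assoc]
            congr 1
            rw [one_div, Real.inv_rpow hlam.le, ← Real.rpow_neg hlam.le, ← Real.rpow_add hlam]
            congr 1; ring
    have hsplit := intervalIntegral.integral_add_adjacent_intervals
      (key_int (γ := γ) hβ1 hlam hil.le) hIint
    rw [mul_add, ← hsplit]
    exact add_le_add (base (1 / lam) hil le_rfl) tail

/-- Singular-integral bound: for `α,β ∈ (0,1)`, `γ ≥ 1`, there is `C` with
`∫₀ᵗ s^{-α}(t-s)^{-β} ((λ(t-s))^{-γ} ∧ 1) ds ≤ C λ^{β-1} t^{-α}` for all `t, λ > 0`. -/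
theorem singular_integral_min_bound (α β γ : ℝ)
    (hα0 : 0 < α) (hα1 : α < 1) (hβ0 : 0 < β) (hβ1 : β < 1) (hγ : 1 ≤ γ) :
    ∃ C : ℝ, 0 < C ∧ ∀ t lam : ℝ, 0 < t → 0 < lam →
      ∫ s in (0:ℝ)..t,
          s ^ (-α) * (t - s) ^ (-β) * min ((lam * (t - s)) ^ (-γ)) 1
        ≤ C * lam ^ (β - 1) * t ^ (-α) := by
  have h1α : (0:ℝ) < 1 - α := by linarith
  have h1β : (0:ℝ) < 1 - β := by linarith
  have hgb : (0:ℝ) < γ + β - 1 := by linarith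
  refine ⟨2 ^ α * (1 / (1 - α) + (1 / (1 - β) + 1 / (γ + β - 1))),
    mul_pos (Real.rpow_pos_of_pos two_pos α)
      (add_pos (one_div_pos.mpr h1α) (add_pos (one_div_pos.mpr h1β) (one_div_pos.mpr hgb))), ?_⟩
  intro t lam ht hlam
  have ht2 : (0:ℝ) < t / 2 := by linarith
  set h : ℝ → ℝ := fun u => u ^ (-β) * min ((lam * u) ^ (-γ)) 1 with hh
  set f : ℝ → ℝ := fun s => s ^ (-α) * (t - s) ^ (-β) * min ((lam * (t - s)) ^ (-γ)) 1 with hf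
  have h2t : ((t / 2 : ℝ)) ^ (-α) = 2 ^ α * t ^ (-α) := by
    rw [div_eq_mul_inv, Real.mul_rpow ht.le (by norm_num),
      Real.inv_rpow (by norm_num : (0:ℝ) ≤ 2), ← Real.rpow_neg (by norm_num : (0:ℝ) ≤ 2),
      neg_neg, mul_comm]
  have hfs : ∀ s : ℝ, f s = s ^ (-α) * h (t - s) := by
    intro s; simp only [hf, hh]; ring
  -- integrability on [0, t/2]
  have hInt1 : IntervalIntegrable f volume 0 (t / 2) := by
    rw [intervalIntegrable_iff_integrableOn_Ioc_of_le ht2.le]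
    have hg : IntegrableOn (fun s : ℝ => (t / 2) ^ (-β) * s ^ (-α)) (Set.Ioc 0 (t / 2)) volume := by
      rw [← intervalIntegrable_iff_integrableOn_Ioc_of_le ht2.le]
      exact (intervalIntegral.intervalIntegrable_rpow' (by linarith)).const_mul _
    have hm : Measurable f := by rw [hf]; fun_prop
    refine hg.mono' hm.aestronglyMeasurable ?_
    filter_upwards [ae_restrict_mem measurableSet_Ioc] with s hs
    have hs0 : (0:ℝ) < s := hs.1
    have hts : (0:ℝ) < t - s := by have := hs.2; linarith
    have hmin0 : 0 ≤ min ((lam * (t - s)) ^ (-γ)) 1 :=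
      le_min (Real.rpow_nonneg (by positivity) _) zero_le_one
    have hb2 : (t - s) ^ (-β) ≤ (t / 2) ^ (-β) :=
      Real.rpow_le_rpow_of_nonpos ht2 (by linarith [hs.2]) (by linarith)
    have hfnn : 0 ≤ f s := by
      rw [hf]
      exact mul_nonneg (mul_nonneg (Real.rpow_nonneg hs0.le _) (Real.rpow_nonneg hts.le _)) hmin0
    rw [Real.norm_of_nonneg hfnn, hf]
    calc s ^ (-α) * (t - s) ^ (-β) * min ((lam * (t - s)) ^ (-γ)) 1
        ≤ s ^ (-α) * (t / 2) ^ (-β) * 1 := by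
          refine mul_le_mul (mul_le_mul_of_nonneg_left hb2 (Real.rpow_nonneg hs0.le _))
            (min_le_right _ _) hmin0 ?_
          exact mul_nonneg (Real.rpow_nonneg hs0.le _) (Real.rpow_nonneg ht2.le _)
      _ = (t / 2) ^ (-β) * s ^ (-α) := by ring
  -- integrability of s ↦ h (t - s) on [t/2, t]
  have hIntH : IntervalIntegrable (fun s => h (t - s)) volume (t / 2) t := by
    have h0 := (key_int (β := β) (γ := γ) (lam := lam) hβ1 hlam ht2.le).comp_sub_left t
    rw [sub_zero, show t - t / 2 = t / 2 by ring] at h0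
    exact h0.symm
  -- integrability on [t/2, t]
  have hInt2 : IntervalIntegrable f volume (t / 2) t := by
    rw [intervalIntegrable_iff_integrableOn_Ioc_of_le (by linarith)]
    have hg : IntegrableOn (fun s : ℝ => (t / 2) ^ (-α) * h (t - s)) (Set.Ioc (t / 2) t)
        volume := by
      rw [← intervalIntegrable_iff_integrableOn_Ioc_of_le (by linarith : t / 2 ≤ t)]
      exact hIntH.const_mul _
    have hm : Measurable f := by rw [hf]; fun_prop
    refine hg.mono' hm.aestronglyMeasurable ?_
    filter_upwards [ae_restrict_mem measurableSet_Ioc] with s hs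
    have hs0 : (0:ℝ) < s := lt_trans ht2 hs.1
    have hts : (0:ℝ) ≤ t - s := by linarith [hs.2]
    have hhnn : 0 ≤ h (t - s) := by
      rw [hh]
      exact mul_nonneg (Real.rpow_nonneg hts _)
        (le_min (Real.rpow_nonneg (by positivity) _) zero_le_one)
    have hfnn : 0 ≤ f s := by
      rw [hfs s]; exact mul_nonneg (Real.rpow_nonneg hs0.le _) hhnn
    rw [Real.norm_of_nonneg hfnn, hfs s]
    exact mul_le_mul_of_nonneg_right
      (Real.rpow_le_rpow_of_nonpos ht2 hs.1.le (by linarith)) hhnn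
  -- Piece 1
  have hP1 : (∫ s in (0:ℝ)..t / 2, f s)
      ≤ 2 ^ α * (1 / (1 - α)) * lam ^ (β - 1) * t ^ (-α) := by
    have hK : IntervalIntegrable
        (fun s : ℝ => (t / 2) ^ (-β) * (lam * (t / 2)) ^ (β - 1) * s ^ (-α)) volume 0 (t / 2) :=
      (intervalIntegral.intervalIntegrable_rpow' (by linarith)).const_mul _
    calc (∫ s in (0:ℝ)..t / 2, f s)
        ≤ ∫ s in (0:ℝ)..t / 2, (t / 2) ^ (-β) * (lam * (t / 2)) ^ (β - 1) * s ^ (-α) := by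
          refine intervalIntegral.integral_mono_on ht2.le hInt1 hK ?_
          intro s hs
          rcases eq_or_lt_of_le hs.1 with hrfl | hs0
          · subst hrfl
            simp [hf, Real.zero_rpow (ne_of_lt (show (-α:ℝ) < 0 by linarith))]
          · have hts : (0:ℝ) < t - s := by have := hs.2; linarith
            have hmin0 : 0 ≤ min ((lam * (t - s)) ^ (-γ)) 1 :=
              le_min (Real.rpow_nonneg (by positivity) _) zero_le_one
            have hb2 : (t - s) ^ (-β) ≤ (t / 2) ^ (-β) :=
              Real.rpow_le_rpow_of_nonpos ht2 (by linarith [hs.2]) (by linarith)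
            have hbd : min ((lam * (t - s)) ^ (-γ)) 1 ≤ (lam * (t / 2)) ^ (β - 1) := by
              refine (min_rpow_le hβ0.le hβ1 hγ (by positivity)).trans ?_
              refine Real.rpow_le_rpow_of_nonpos (by positivity) ?_ (by linarith)
              have : t / 2 ≤ t - s := by linarith [hs.2]
              nlinarith
            rw [hf]
            calc s ^ (-α) * (t - s) ^ (-β) * min ((lam * (t - s)) ^ (-γ)) 1
                ≤ s ^ (-α) * (t / 2) ^ (-β) * (lam * (t / 2)) ^ (β - 1) := by
                  refine mul_le_mul (mul_le_mul_of_nonneg_left hb2 (Real.rpow_nonneg hs0.le _))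
                    hbd hmin0 ?_
                  exact mul_nonneg (Real.rpow_nonneg hs0.le _) (Real.rpow_nonneg ht2.le _)
              _ = (t / 2) ^ (-β) * (lam * (t / 2)) ^ (β - 1) * s ^ (-α) := by ring
      _ = (t / 2) ^ (-β) * (lam * (t / 2)) ^ (β - 1) * ((t / 2) ^ (-α + 1) / (-α + 1)) := by
          rw [intervalIntegral.integral_const_mul, integral_rpow (Or.inl (by linarith)),
            Real.zero_rpow (by linarith : -α + 1 ≠ 0)]
          ring
      _ = 2 ^ α * (1 / (1 - α)) * lam ^ (β - 1) * t ^ (-α) := by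
          rw [Real.mul_rpow hlam.le ht2.le,
            show ((t / 2 : ℝ) ^ (-β) * (lam ^ (β - 1) * (t / 2) ^ (β - 1))
                * ((t / 2) ^ (-α + 1) / (-α + 1)))
              = lam ^ (β - 1) * ((t / 2) ^ (-β) * (t / 2) ^ (β - 1) * (t / 2) ^ (-α + 1))
                * (1 / (-α + 1)) by ring,
            ← Real.rpow_add ht2, ← Real.rpow_add ht2,
            show (-β + (β - 1) + (-α + 1) : ℝ) = -α by ring, h2t]
          ring
  -- Piece 2
  have hP2 : (∫ s in (t / 2)..t, f s)
      ≤ 2 ^ α * (1 / (1 - β) + 1 / (γ + β - 1)) * lam ^ (β - 1) * t ^ (-α) := by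
    have hg2 : IntervalIntegrable (fun s => (t / 2) ^ (-α) * h (t - s)) volume (t / 2) t :=
      hIntH.const_mul _
    calc (∫ s in (t / 2)..t, f s) ≤ ∫ s in (t / 2)..t, (t / 2) ^ (-α) * h (t - s) := by
          refine intervalIntegral.integral_mono_on (by linarith) hInt2 hg2 ?_
          intro s hs
          have hs0 : (0:ℝ) < s := lt_of_lt_of_le ht2 hs.1
          have hts : (0:ℝ) ≤ t - s := by linarith [hs.2]
          have hhnn : 0 ≤ h (t - s) := by
            rw [hh]
            exact mul_nonneg (Real.rpow_nonneg hts _)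
              (le_min (Real.rpow_nonneg (by positivity) _) zero_le_one)
          rw [hfs s]
          exact mul_le_mul_of_nonneg_right
            (Real.rpow_le_rpow_of_nonpos ht2 hs.1 (by linarith)) hhnn
      _ = (t / 2) ^ (-α) * ∫ s in (t / 2)..t, h (t - s) :=
          intervalIntegral.integral_const_mul _ _
      _ = (t / 2) ^ (-α) * ∫ u in (0:ℝ)..t / 2, h u := by
          have e := intervalIntegral.integral_comp_sub_left (a := t / 2) (b := t) h t
          rw [show t - t = (0:ℝ) by ring, show t - t / 2 = t / 2 by ring] at e
          rw [e]
      _ ≤ (t / 2) ^ (-α) * (lam ^ (β - 1) * (1 / (1 - β) + 1 / (γ + β - 1))) := by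
          refine mul_le_mul_of_nonneg_left ?_ (Real.rpow_nonneg ht2.le _)
          rw [hh]
          exact key_bound hβ0 hβ1 hγ ht2 hlam
      _ = 2 ^ α * (1 / (1 - β) + 1 / (γ + β - 1)) * lam ^ (β - 1) * t ^ (-α) := by
          rw [h2t]; ring
  have hsplit := intervalIntegral.integral_add_adjacent_intervals hInt1 hInt2
  calc (∫ s in (0:ℝ)..t, f s) = (∫ s in (0:ℝ)..t / 2, f s) + ∫ s in (t / 2)..t, f s :=
        hsplit.symm
    _ ≤ 2 ^ α * (1 / (1 - α)) * lam ^ (β - 1) * t ^ (-α)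
        + 2 ^ α * (1 / (1 - β) + 1 / (γ + β - 1)) * lam ^ (β - 1) * t ^ (-α) :=
        add_le_add hP1 hP2
    _ = 2 ^ α * (1 / (1 - α) + (1 / (1 - β) + 1 / (γ + β - 1))) * lam ^ (β - 1) * t ^ (-α) := by
        ring
end
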